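/- Let H₁ = [t−1]^{(3)} ∖ {(t−3)(t−2)(t−1)} and let x be an optimum weighting of H₁. If x₁ = … = x_{t−4} = a and x_{t−3} = x_{t−2} = x_{t−1} = b, then b = a − a² and 3a² − (t−1)a + 1 = 0; moreover λ(H₁) = C(t−4,3)a³ + 3C(t−4,2)a²b + 3(t−4)ab². -/

import Mathlib

structure UniformHypergraph (r : ℕ) where
  verts : Finset ℕ
  edges : Finset (Finset ℕ)
  edge_sub : ∀ e ∈ edges, e ⊆ verts
  edge_card : ∀ e ∈ edges, e.card = r

namespace UniformHypergraph

variable {r : ℕ}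

/-- The polynomial value `λ(E, x) = Σ_{e ∈ E} Π_{i ∈ e} x_i`. -/
def polyValue (E : Finset (Finset ℕ)) (x : ℕ → ℝ) : ℝ :=
  ∑ e ∈ E, ∏ i ∈ e, x i

/-- A legal weighting: nonnegative, supported on the vertex set, summing to 1. -/
def LegalWeighting (G : UniformHypergraph r) (x : ℕ → ℝ) : Prop :=
  (∀ i, 0 ≤ x i) ∧ (∀ i ∉ G.verts, x i = 0) ∧ ∑ i ∈ G.verts, x i = 1

/-- The Lagrangian of a hypergraph. -/
noncomputable def lagrangian (G : UniformHypergraph r) : ℝ :=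
  sSup {l : ℝ | ∃ x, G.LegalWeighting x ∧ l = polyValue G.edges x}

/-- An optimum weighting attains the Lagrangian. -/
def IsOptimal (G : UniformHypergraph r) (x : ℕ → ℝ) : Prop :=
  G.LegalWeighting x ∧ polyValue G.edges x = G.lagrangian

def IsSubgraph (H G : UniformHypergraph r) : Prop :=
  H.verts ⊆ G.verts ∧ H.edges ⊆ G.edges

def IsProperSubgraph (H G : UniformHypergraph r) : Prop :=
  H.IsSubgraph G ∧ (H.verts ≠ G.verts ∨ H.edges ≠ G.edges)

/-- A hypergraph is dense if every proper subgraph has strictly smaller Lagrangian. -/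
def Dense (G : UniformHypergraph r) : Prop :=
  ∀ H : UniformHypergraph r, H.IsProperSubgraph G → H.lagrangian < G.lagrangian

/-- The link `E_i` of a vertex `i`. -/
def link (G : UniformHypergraph r) (i : ℕ) : Finset (Finset ℕ) :=
  (G.edges.filter fun e => i ∈ e).image fun e => e.erase i

/-- The pair link `E_{ij}`. -/
def pairLink (G : UniformHypergraph r) (i j : ℕ) : Finset (Finset ℕ) :=
  (G.edges.filter fun e => i ∈ e ∧ j ∈ e).image fun e => (e.erase i).erase j

/-- `E_{i \ j} = E_i ∩ E_j^c`. -/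
def linkDiff (G : UniformHypergraph r) (i j : ℕ) : Finset (Finset ℕ) :=
  (G.link i).filter fun A => j ∉ A ∧ insert j A ∉ G.edges

/-- `G` contains a clique of order `t`. -/
def HasClique (G : UniformHypergraph r) (t : ℕ) : Prop :=
  ∃ S ⊆ G.verts, S.card = t ∧ S.powersetCard r ⊆ G.edges

/-- `G` is left-compressed: replacing a vertex of an edge by a smaller vertex
not in the edge yields an edge. -/
def LeftCompressed (G : UniformHypergraph r) : Prop :=
  ∀ e ∈ G.edges, ∀ i j : ℕ, i ∈ G.verts → i < j → j ∈ e → i ∉ e →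
    insert i (e.erase j) ∈ G.edges

/-- The subgraph induced on a vertex set `S`. -/
def induce (G : UniformHypergraph r) (S : Finset ℕ) : UniformHypergraph r :=
  ⟨G.verts ∩ S, G.edges.filter fun e => e ⊆ S,
   fun e he => Finset.subset_inter (G.edge_sub e (Finset.mem_filter.mp he).1)
     (Finset.mem_filter.mp he).2,
   fun e he => G.edge_card e (Finset.mem_filter.mp he).1⟩

end UniformHypergraph

/-- The complete `r`-graph on vertex set `{1, …, t}`. -/
def completeHG (t r : ℕ) : UniformHypergraph r :=
  ⟨Finset.Icc 1 t, (Finset.Icc 1 t).powersetCard r,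
   fun _ he => (Finset.mem_powersetCard.mp he).1,
   fun _ he => (Finset.mem_powersetCard.mp he).2⟩

/-- `H₁ = [t-1]^{(3)} \ {(t-3)(t-2)(t-1)}`. -/
def H1 (t : ℕ) : UniformHypergraph 3 :=
  ⟨Finset.Icc 1 (t-1), (completeHG (t-1) 3).edges.erase {t-3, t-2, t-1},
   fun e he => (completeHG (t-1) 3).edge_sub e (Finset.mem_of_mem_erase he),
   fun e he => (completeHG (t-1) 3).edge_card e (Finset.mem_of_mem_erase he)⟩

/-! Write `t = s + 5`: the `a`-block is `{1, …, s+1}` and the `b`-block is `{s+2, s+3, s+4}`.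
Since `H₁` is the complete 3-graph on `[s+4]` minus one triple, its polynomial is
`e₃(y) - y_{s+2} y_{s+3} y_{s+4}`, which is bilinear in `u = y₁` and `v = y_{s+4}`.
Moving weight `ε` from vertex `s+4` to vertex `1` therefore changes it by `εD - ε²R` with
`D = b² + (b - a)(sa + 2b)` and `R = sa + 2b`. Optimality forces `D ≤ 0` if `b > 0` and
`D ≥ 0` if `a > 0`; together with `(s+1)a + 3b = 1` the equation `D = 0` is exactly
`3a² - (s+4)a + 1 = 0` and `b = a - a²`. If `b = 0`, then `D = -sa² ≥ 0` forces `s = 0`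
and `a = 1`. -/

open Finset Filter Topology

namespace Multiset

variable {R : Type*} [CommSemiring R]

theorem esymm_zero (s : Multiset R) : s.esymm 0 = 1 := by
  simp [esymm]

theorem esymm_cons_succ (x : R) (s : Multiset R) (k : ℕ) :
    (x ::ₘ s).esymm (k + 1) = s.esymm (k + 1) + x * s.esymm k := by
  simp [esymm, powersetCard_cons, map_map, sum_map_mul_left]

theorem esymm_replicate (n k : ℕ) (c : R) :
    (replicate n c).esymm k = n.choose k * c ^ k := by
  induction n generalizing k with
  | zero => cases k <;> simp [esymm, powersetCard_zero_right]
  | succ n ih =>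
    cases k with
    | zero => simp [esymm_zero]
    | succ k =>
      rw [replicate_succ, esymm_cons_succ, ih, ih, Nat.choose_succ_succ']
      push_cast
      ring

end Multiset

theorem nonpos_of_forall_mul_sub_sq_mul_nonpos {D R c : ℝ} (hc : 0 < c)
    (h : ∀ ε, 0 < ε → ε ≤ c → ε * D - ε ^ 2 * R ≤ 0) : D ≤ 0 := by
  have hlim : Tendsto (fun ε => ε * R) (𝓝[>] 0) (𝓝 0) := by
    simpa using ((continuous_mul_const R).tendsto 0).mono_left nhdsWithin_le_nhds
  refine ge_of_tendsto hlim ?_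
  filter_upwards [Ioo_mem_nhdsGT hc] with ε ⟨hε, hεc⟩
  nlinarith [h ε hε hεc.le]

namespace UniformHypergraph

variable {r : ℕ} {G : UniformHypergraph r} {x : ℕ → ℝ}

theorem LegalWeighting.le_one (hx : G.LegalWeighting x) (i : ℕ) : x i ≤ 1 := by
  obtain ⟨hnn, hsupp, hsum⟩ := hx
  by_cases hi : i ∈ G.verts
  · exact hsum ▸ single_le_sum (fun j _ => hnn j) hi
  · simp [hsupp i hi]

theorem polyValue_le_lagrangian (hx : G.LegalWeighting x) :
    polyValue G.edges x ≤ G.lagrangian := by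
  refine le_csSup ⟨(#G.edges : ℝ), ?_⟩ ⟨x, hx, rfl⟩
  rintro _ ⟨y, hy, rfl⟩
  calc polyValue G.edges y ≤ ∑ _e ∈ G.edges, (1 : ℝ) :=
        sum_le_sum fun e _ => prod_le_one (fun i _ => hy.1 i) fun i _ => hy.le_one i
    _ = #G.edges := by simp

theorem LegalWeighting.transfer (hx : G.LegalWeighting x) {i j : ℕ} (hi : i ∈ G.verts)
    (hj : j ∈ G.verts) (hij : i ≠ j) {ε : ℝ} (hεi : -x i ≤ ε) (hεj : ε ≤ x j) :
    G.LegalWeighting (Function.update (Function.update x i (x i + ε)) j (x j - ε)) := by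
  obtain ⟨hnn, hsupp, hsum⟩ := hx
  refine ⟨fun k => ?_, fun k hk => ?_, ?_⟩
  · rcases eq_or_ne k j with rfl | hkj
    · rw [Function.update_self]
      linarith
    rcases eq_or_ne k i with rfl | hki
    · rw [Function.update_of_ne hkj, Function.update_self]
      linarith
    rw [Function.update_of_ne hkj, Function.update_of_ne hki]
    exact hnn k
  · simp [ne_of_mem_of_not_mem hi hk |>.symm, ne_of_mem_of_not_mem hj hk |>.symm, hsupp k hk]
  · have hi' : i ∈ G.verts \ {j} := mem_sdiff.2 ⟨hi, by simpa using hij⟩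
    rw [sum_update_of_mem hj, sum_update_of_mem hi', ← hsum,
      sum_eq_add_sum_sdiff_singleton_of_mem hj, sum_eq_add_sum_sdiff_singleton_of_mem hi']
    ring

theorem polyValue_erase {E : Finset (Finset ℕ)} {T : Finset ℕ} (hT : T ∈ E)
    (y : ℕ → ℝ) :
    polyValue (E.erase T) y = polyValue E y - ∏ i ∈ T, y i :=
  sum_erase_eq_sub hT

end UniformHypergraph

theorem polyValue_completeHG (n k : ℕ) (y : ℕ → ℝ) :
    UniformHypergraph.polyValue (completeHG n k).edges y = ((Icc 1 n).val.map y).esymm k :=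
  (esymm_map_val y _ k).symm

open UniformHypergraph

theorem H1_polyValue (s : ℕ) (y : ℕ → ℝ) {a b : ℝ} (hA : ∀ i ∈ Icc 2 (s + 1), y i = a)
    (h2 : y (s + 2) = b) (h3 : y (s + 3) = b) :
    polyValue (H1 (s + 5)).edges y =
      (b ::ₘ b ::ₘ Multiset.replicate s a).esymm 3
        + (y 1 + y (s + 4)) * (b ::ₘ b ::ₘ Multiset.replicate s a).esymm 2
        + y 1 * y (s + 4) * (b ::ₘ b ::ₘ Multiset.replicate s a).esymm 1
        - b ^ 2 * y (s + 4) := by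
  set M := b ::ₘ b ::ₘ Multiset.replicate s a
  have hT : {s + 2, s + 3, s + 4} ∈ (completeHG (s + 4) 3).edges := by
    refine mem_powersetCard.2 ⟨fun i hi => ?_, by simp⟩
    simp only [mem_insert, mem_singleton] at hi
    simp only [mem_Icc]
    omega
  have hV : (Icc 1 (s + 4)).val.map y = y 1 ::ₘ y (s + 4) ::ₘ M := by
    have hsplit : Icc 1 (s + 4) =
        insert 1 (insert (s + 4) (insert (s + 2) (insert (s + 3) (Icc 2 (s + 1))))) := by
      ext i
      simp only [mem_Icc, mem_insert]
      omega
    have hrep : (Icc 2 (s + 1)).val.map y = Multiset.replicate s a :=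
      Multiset.eq_replicate.2 ⟨by simp, fun c hc => by
        obtain ⟨i, hi, rfl⟩ := Multiset.mem_map.1 hc
        exact hA i hi⟩
    rw [hsplit, insert_val_of_notMem (by simp), insert_val_of_notMem (by simp),
      insert_val_of_notMem (by simp), insert_val_of_notMem (by simp)]
    simp only [Multiset.map_cons, hrep, h2, h3, M]
  rw [show (H1 (s + 5)).edges = (completeHG (s + 4) 3).edges.erase {s + 2, s + 3, s + 4} from rfl,
    polyValue_erase hT, polyValue_completeHG, hV, Multiset.esymm_cons_succ (y 1) _ 2,
    Multiset.esymm_cons_succ (y (s + 4)) M 2, Multiset.esymm_cons_succ (y (s + 4)) M 1,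
    prod_insert (by simp), prod_insert (by simp), prod_singleton, h2, h3]
  ring

theorem H1_block_weight_sum {s : ℕ} {x : ℕ → ℝ} {a b : ℝ}
    (hx : (H1 (s + 5)).LegalWeighting x)
    (hA : ∀ i ∈ Icc 1 (s + 1), x i = a) (hB : ∀ i ∈ Icc (s + 2) (s + 4), x i = b) :
    (s + 1) * a + 3 * b = 1 := by
  have hsplit : Icc 1 (s + 4) = Icc 1 (s + 1) ∪ Icc (s + 2) (s + 4) := by
    ext i
    simp only [mem_union, mem_Icc]
    omega
  have hdisj : Disjoint (Icc 1 (s + 1)) (Icc (s + 2) (s + 4)) :=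
    disjoint_left.2 fun i hi hi' => by simp only [mem_Icc] at hi hi'; omega
  have := hx.2.2
  rw [show (H1 (s + 5)).verts = Icc 1 (s + 4) from rfl, hsplit, sum_union hdisj,
    sum_congr rfl hA, sum_congr rfl hB] at this
  simpa using this

theorem H1_transfer_gain_nonpos {s : ℕ} {x : ℕ → ℝ} {a b : ℝ}
    (hx : (H1 (s + 5)).IsOptimal x)
    (hA : ∀ i ∈ Icc 1 (s + 1), x i = a) (hB : ∀ i ∈ Icc (s + 2) (s + 4), x i = b)
    {ε : ℝ} (hεa : -a ≤ ε) (hεb : ε ≤ b) :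
    ε * (b ^ 2 + (b - a) * (s * a + 2 * b)) - ε ^ 2 * (s * a + 2 * b) ≤ 0 := by
  have hx1 : x 1 = a := hA 1 (by simp)
  have hx4 : x (s + 4) = b := hB (s + 4) (by simp)
  set y := Function.update (Function.update x 1 (x 1 + ε)) (s + 4) (x (s + 4) - ε)
  have hy : (H1 (s + 5)).LegalWeighting y :=
    hx.1.transfer (by simp [H1]) (by simp [H1]) (by omega) (by linarith) (by linarith)
  have hyx : ∀ i, 1 < i → i < s + 4 → y i = x i := fun i h1 h4 => by
    simp [y, h1.ne', h4.ne]
  have hA' : ∀ i ∈ Icc 2 (s + 1), x i = a := fun i hi => hA i (by simp at hi ⊢; omega)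
  have hyA : ∀ i ∈ Icc 2 (s + 1), y i = a := fun i hi => by
    simp only [mem_Icc] at hi
    rw [hyx i (by omega) (by omega), hA' i (by simp; omega)]
  have hx2 : x (s + 2) = b := hB _ (by simp)
  have hx3 : x (s + 3) = b := hB _ (by simp)
  have hle := polyValue_le_lagrangian hy
  rw [← hx.2, H1_polyValue s y hyA (by rw [hyx _ (by omega) (by omega), hx2])
    (by rw [hyx _ (by omega) (by omega), hx3]), H1_polyValue s x hA' hx2 hx3] at hle
  have hy1 : y 1 = a + ε := by simp [y, hx1]
  have hy4 : y (s + 4) = b - ε := by simp [y, hx4]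
  have he1 : (b ::ₘ b ::ₘ Multiset.replicate s a).esymm 1 = s * a + 2 * b := by
    simp only [Multiset.esymm_cons_succ, Multiset.esymm_replicate, Multiset.esymm_zero,
      zero_add, Nat.choose_one_right]
    ring
  rw [hy1, hy4, hx1, hx4, he1] at hle
  linear_combination hle

theorem H1_block_weights_of_transfer_gain_nonpos {s : ℕ} {a b : ℝ} (ha : 0 ≤ a) (hb : 0 ≤ b)
    (hsum : (s + 1) * a + 3 * b = 1)
    (h : ∀ ε, -a ≤ ε → ε ≤ b →
      ε * (b ^ 2 + (b - a) * (s * a + 2 * b)) - ε ^ 2 * (s * a + 2 * b) ≤ 0) :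
    b = a - a ^ 2 ∧ 3 * a ^ 2 - (s + 4) * a + 1 = 0 := by
  set D := b ^ 2 + (b - a) * (s * a + 2 * b) with hD
  set R := s * a + 2 * b
  have hD_nonpos : 0 < b → D ≤ 0 := fun hb' =>
    nonpos_of_forall_mul_sub_sq_mul_nonpos hb' fun ε hε hεb => h ε (by linarith) hεb
  have hD_nonneg : 0 < a → 0 ≤ D := fun ha' => by
    refine neg_nonpos.1 (nonpos_of_forall_mul_sub_sq_mul_nonpos (R := R) ha' fun ε hε hεa => ?_)
    linear_combination h (-ε) (by linarith) (by linarith)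
  have ha' : 0 < a := by
    refine ha.lt_of_ne fun ha0 => ?_
    subst ha0
    have : b = 1 / 3 := by linarith
    have := hD_nonpos (by linarith)
    simp only [hD] at this
    nlinarith
  rcases hb.lt_or_eq with hb' | hb0
  · have hD0 : D = 0 := le_antisymm (hD_nonpos hb') (hD_nonneg ha')
    have hquad : 3 * a ^ 2 - (s + 4) * a + 1 = 0 := by
      linear_combination 3 * hD0 + (3 * a - 3 * b - 1) * hsum
    exact ⟨by linear_combination (1 / 3) * hsum + (1 / 3) * hquad, hquad⟩
  · subst hb0
    have hs : (s : ℝ) * a ^ 2 ≤ 0 := by linarith [hD_nonneg ha']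
    have hs0 : (s : ℝ) = 0 := by
      nlinarith [sq_pos_of_pos ha', (Nat.cast_nonneg s : (0 : ℝ) ≤ s)]
    have ha1 : a = 1 := by rw [hs0] at hsum; linarith
    subst ha1
    rw [hs0]
    norm_num

/-- For an optimum weighting of `H₁ = [t-1]^{(3)} ∖ {(t-3)(t-2)(t-1)}` with
`x₁ = … = x_{t-4} = a` and `x_{t-3} = x_{t-2} = x_{t-1} = b`, one has
`b = a - a²`, `3a² - (t-1)a + 1 = 0`, and
`λ(H₁) = C(t-4,3)a³ + 3C(t-4,2)a²b + 3(t-4)ab²`. -/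
theorem H1_optimum_weighting {t : ℕ} (ht : 5 ≤ t) (x : ℕ → ℝ)
    (hx : (H1 t).IsOptimal x) (a b : ℝ)
    (ha : ∀ i ∈ Finset.Icc 1 (t - 4), x i = a)
    (hb : ∀ i ∈ Finset.Icc (t - 3) (t - 1), x i = b) :
    b = a - a ^ 2 ∧ 3 * a ^ 2 - ((t : ℝ) - 1) * a + 1 = 0 ∧
    (H1 t).lagrangian = ((t - 4).choose 3 : ℝ) * a ^ 3 +
      3 * ((t - 4).choose 2 : ℝ) * a ^ 2 * b + 3 * ((t : ℝ) - 4) * a * b ^ 2 := by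
  obtain ⟨s, rfl⟩ : ∃ s, t = s + 5 := ⟨t - 5, by omega⟩
  simp only [show s + 5 - 4 = s + 1 from rfl, show s + 5 - 3 = s + 2 from rfl,
    show s + 5 - 1 = s + 4 from rfl] at ha hb ⊢
  have hx1 : x 1 = a := ha 1 (by simp)
  have hx2 : x (s + 2) = b := hb _ (by simp)
  have hx3 : x (s + 3) = b := hb _ (by simp)
  have hx4 : x (s + 4) = b := hb _ (by simp)
  obtain ⟨hb_eq, hquad⟩ := H1_block_weights_of_transfer_gain_nonpos (hx1 ▸ hx.1.1 1)
    (hx2 ▸ hx.1.1 _) (H1_block_weight_sum hx.1 ha hb) fun ε => H1_transfer_gain_nonpos hx ha hb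
  refine ⟨hb_eq, by push_cast; linear_combination hquad, ?_⟩
  rw [← hx.2, H1_polyValue s x (fun i hi => ha i (by simp at hi ⊢; omega)) hx2 hx3, hx1, hx4]
  simp only [Multiset.esymm_cons_succ, Multiset.esymm_replicate, Multiset.esymm_zero,
    zero_add, Nat.choose_one_right, Nat.choose_succ_succ']
  push_cast
  ring
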